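/- arXiv:1611.09003 — 6 statements merged into one kernel-verified Lean document; each statement's English description precedes it below -/
import Mathlib

section
/- A linear extension L of a partial order P fulfills the 2+2 rule if and only if L contains no alternating 4-anticycle. -/
/-! By totality of `L`, the relations `a1 ≺_L b0` and `a0 ≺_L b1` of an alternating 4-anticycle say
exactly that the 2+2 rule fails for `a0 ≺_P b0`, `a1 ≺_P b1`. The remaining incomparabilities
that make an anticycle a 2+2 come from transitivity of `P` and from `L` extending `P`. -/

variable {V : Type*}

/-- A strict partial order: irreflexive and transitive. -/
def IsPartialOrd (P : V → V → Prop) : Prop := Irreflexive P ∧ Transitive P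

/-- A strict linear order: irreflexive, transitive, and total. -/
def IsLinearOrd (L : V → V → Prop) : Prop :=
  Irreflexive L ∧ Transitive L ∧ ∀ u v : V, u ≠ v → L u v ∨ L v u

/-- `L` is a linear extension of `P`. -/
def IsLinExt (P L : V → V → Prop) : Prop :=
  IsLinearOrd L ∧ ∀ u v : V, P u v → L u v

/-- Four distinct elements `a0, b0, a1, b1` form a suborder `2+2` of `P`:
their only `P`-relations are `a0 ≺ b0` and `a1 ≺ b1`. -/
def IsTwoPlusTwo (P : V → V → Prop) (a0 b0 a1 b1 : V) : Prop :=
  ([a0, b0, a1, b1] : List V).Nodup ∧ P a0 b0 ∧ P a1 b1 ∧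
  ¬ P b0 a0 ∧ ¬ P b1 a1 ∧
  ¬ P a0 a1 ∧ ¬ P a1 a0 ∧ ¬ P a0 b1 ∧ ¬ P b1 a0 ∧
  ¬ P a1 b0 ∧ ¬ P b0 a1 ∧ ¬ P b0 b1 ∧ ¬ P b1 b0

/-- The linear extension `L` of `P` fulfills the `2+2` rule. -/
def TwoPlusTwoRule (P L : V → V → Prop) : Prop :=
  ∀ a0 b0 a1 b1 : V, IsTwoPlusTwo P a0 b0 a1 b1 → L b0 a1 ∨ L b1 a0

/-- Four distinct elements form an alternating 4-anticycle of `L` w.r.t. `P`. -/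
def IsAlt4Anticycle (P L : V → V → Prop) (a0 b0 a1 b1 : V) : Prop :=
  ([a0, b0, a1, b1] : List V).Nodup ∧ P a0 b0 ∧ P a1 b1 ∧
  L a1 b0 ∧ ¬ P a1 b0 ∧ L a0 b1 ∧ ¬ P a0 b1

/-- An alternating `2k`-anticycle of `L` w.r.t. `P`, given by `a, b : ZMod k → V`. -/
def IsAltAnticycle (P L : V → V → Prop) (k : ℕ) (a b : ZMod k → V) : Prop :=
  Function.Injective a ∧ Function.Injective b ∧ (∀ i j : ZMod k, a i ≠ b j) ∧
  ∀ i : ZMod k, P (a i) (b i) ∧ L (a (i + 1)) (b i) ∧ ¬ P (a (i + 1)) (b i)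

/-- `P` is a linear-interval order: the intersection of a linear order and an
interval order (given by an interval representation `l`, `r`). -/
def IsLinearIntervalOrder (P : V → V → Prop) : Prop :=
  ∃ (L : V → V → Prop) (l r : V → ℝ), IsLinearOrd L ∧ (∀ v, l v ≤ r v) ∧
    ∀ u v : V, P u v ↔ L u v ∧ r u < l v

theorem IsPartialOrd.asymm {P : V → V → Prop} (hP : IsPartialOrd P) {u v : V}
    (huv : P u v) : ¬ P v u :=
  fun hvu => hP.1 u (hP.2 huv hvu)

theorem IsLinearOrd.asymm {L : V → V → Prop} (hL : IsLinearOrd L) {u v : V}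
    (huv : L u v) : ¬ L v u :=
  fun hvu => hL.1 u (hL.2.1 huv hvu)

theorem IsLinearOrd.rel_of_not_rel {L : V → V → Prop} (hL : IsLinearOrd L) {u v : V}
    (hne : u ≠ v) (hvu : ¬ L v u) : L u v :=
  (hL.2.2 u v hne).resolve_right hvu

theorem IsAlt4Anticycle.isTwoPlusTwo {P L : V → V → Prop} (hP : IsPartialOrd P)
    (hL : IsLinExt P L) {a0 b0 a1 b1 : V} (h : IsAlt4Anticycle P L a0 b0 a1 b1) :
    IsTwoPlusTwo P a0 b0 a1 b1 := by
  obtain ⟨hnd, hab0, hab1, hL10, hnP10, hL01, hnP01⟩ := h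
  exact ⟨hnd, hab0, hab1, hP.asymm hab0, hP.asymm hab1,
    fun h => hnP01 (hP.2 h hab1), fun h => hnP10 (hP.2 h hab0), hnP01,
    fun h => hL.1.asymm hL01 (hL.2 _ _ h), hnP10, fun h => hL.1.asymm hL10 (hL.2 _ _ h),
    fun h => hnP01 (hP.2 hab0 h), fun h => hnP10 (hP.2 hab1 h)⟩

theorem IsTwoPlusTwo.isAlt4Anticycle {P L : V → V → Prop} (hL : IsLinearOrd L)
    {a0 b0 a1 b1 : V} (h : IsTwoPlusTwo P a0 b0 a1 b1) (h10 : ¬ L b0 a1) (h01 : ¬ L b1 a0) :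
    IsAlt4Anticycle P L a0 b0 a1 b1 := by
  obtain ⟨hnd, hab0, hab1, -, -, -, -, hnP01, -, hnP10, -, -, -⟩ := h
  have hne : a1 ≠ b0 ∧ a0 ≠ b1 := by
    simp only [List.nodup_cons, List.mem_cons, List.not_mem_nil] at hnd
    tauto
  exact ⟨hnd, hab0, hab1, hL.rel_of_not_rel hne.1 h10, hnP10,
    hL.rel_of_not_rel hne.2 h01, hnP01⟩

theorem stmt0 {V : Type*} (P L : V → V → Prop)
    (hP : IsPartialOrd P) (hL : IsLinExt P L) :
    TwoPlusTwoRule P L ↔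
      ∀ a0 b0 a1 b1 : V, ¬ IsAlt4Anticycle P L a0 b0 a1 b1 := by
  constructor
  · intro hrule a0 b0 a1 b1 hcyc
    have h22 := hcyc.isTwoPlusTwo hP hL
    obtain ⟨-, -, -, hL10, -, hL01, -⟩ := hcyc
    rcases hrule a0 b0 a1 b1 h22 with h | h
    exacts [hL.1.asymm hL10 h, hL.1.asymm hL01 h]
  · intro hnone a0 b0 a1 b1 h22
    by_contra! hviol
    exact hnone a0 b0 a1 b1 (h22.isAlt4Anticycle hL.1 hviol.1 hviol.2)
end

section
/- If a partial order P is the intersection of a linear order L and an interval order P_I on the same ground set, then for any suborder 2+2 in P with relations a0 ≺_P b0 and a1 ≺_P b1, the implications a0 ≺_L a1 ⟺ b0 ≺_L a1 ⟺ b0 ≺_L b1 ⟺ a0 ≺_L b1 hold. -/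
variable {V : Type*}

/-!
Both blocks of the `2+2` are forced to one side of each other by the following
observation: if `a0 ≺_L b1` and `a1 ≺_L b0`, these two `L`-relations are not
`P`-relations, so the corresponding intervals overlap, and together with
`a0 ≺_P b0`, `a1 ≺_P b1` this gives `l b1 ≤ r a0 < l b0 ≤ r a1 < l b1`.
-/

section LinearInterval

variable {V : Type*} {P L : V → V → Prop} {l r : V → ℝ}

theorem right_lt_left_of_rel (hP : ∀ u v : V, P u v ↔ L u v ∧ r u < l v) {u v : V}
    (h : P u v) : r u < l v :=
  ((hP u v).1 h).2

theorem left_le_right_of_not_rel (hP : ∀ u v : V, P u v ↔ L u v ∧ r u < l v) {u v : V}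
    (hL : L u v) (hn : ¬P u v) : l v ≤ r u :=
  le_of_not_gt fun h => hn ((hP u v).2 ⟨hL, h⟩)

theorem not_isAlt4Anticycle (hP : ∀ u v : V, P u v ↔ L u v ∧ r u < l v) (a0 b0 a1 b1 : V) :
    ¬IsAlt4Anticycle P L a0 b0 a1 b1 := by
  rintro ⟨-, p00, p11, L10, n10, L01, n01⟩
  have := right_lt_left_of_rel hP p00
  have := right_lt_left_of_rel hP p11
  have := left_le_right_of_not_rel hP L10 n10
  have := left_le_right_of_not_rel hP L01 n01
  linarith

theorem IsTwoPlusTwo.rel_of_rel (hP : ∀ u v : V, P u v ↔ L u v ∧ r u < l v)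
    (hL : IsLinearOrd L) {a0 b0 a1 b1 : V} (h22 : IsTwoPlusTwo P a0 b0 a1 b1)
    (h : L a0 b1) : L b0 a1 := by
  obtain ⟨hnd, p00, p11, -, -, -, -, n01, -, n10, -, -, -⟩ := h22
  have hne : b0 ≠ a1 := by simp_all
  refine (hL.2.2 b0 a1 hne).resolve_right fun L10 => ?_
  exact not_isAlt4Anticycle hP a0 b0 a1 b1 ⟨hnd, p00, p11, L10, n10, h, n01⟩

end LinearInterval

theorem stmt1_general {V : Type*} (P L : V → V → Prop) (l r : V → ℝ)
    (hL : IsLinearOrd L)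
    (hP : ∀ u v : V, P u v ↔ L u v ∧ r u < l v)
    (a0 b0 a1 b1 : V) (h22 : IsTwoPlusTwo P a0 b0 a1 b1) :
    (L a0 a1 ↔ L b0 a1) ∧ (L b0 a1 ↔ L b0 b1) ∧ (L b0 b1 ↔ L a0 b1) := by
  have key : L a0 b1 → L b0 a1 := h22.rel_of_rel hP hL
  have trans : ∀ {x y z}, L x y → L y z → L x z :=
    fun hxy hyz => hL.2.1 hxy hyz
  have L00 : L a0 b0 := ((hP a0 b0).1 h22.2.1).1
  have L11 : L a1 b1 := ((hP a1 b1).1 h22.2.2.1).1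
  exact ⟨⟨fun h => key (trans h L11), trans L00⟩,
    ⟨(trans · L11), fun h => key (trans L00 h)⟩,
    ⟨trans L00, fun h => trans (key h) L11⟩⟩

theorem stmt1 {V : Type*} (P L : V → V → Prop) (l r : V → ℝ)
    (hL : IsLinearOrd L) (hlr : ∀ v, l v ≤ r v)
    (hP : ∀ u v : V, P u v ↔ L u v ∧ r u < l v)
    (a0 b0 a1 b1 : V) (h22 : IsTwoPlusTwo P a0 b0 a1 b1) :
    (L a0 a1 ↔ L b0 a1) ∧ (L b0 a1 ↔ L b0 b1) ∧ (L b0 b1 ↔ L a0 b1) :=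
  stmt1_general P L l r hL hP a0 b0 a1 b1 h22
end

section
/- If a linear extension L of a partial order P contains no alternating 4-anticycle, then L contains no alternating 2k-anticycle for any k ≥ 2. -/
variable {V : Type*}

/-! For each `i`, the pairs `i` and `i + 1` do not form a 4-anticycle, so either
`b (i + 1) ≺_L a i`, whence `b (i + 1) ≺_L b i`, or `a i ≺_P b (i + 1)`. The first cannot hold for
every `i`, since the `b i` would descend around the cycle in `L`. The second is a chord: dropping
`b i` and `a (i + 1)` leaves an alternating anticycle with one pair fewer. Induction ends at one
pair, where `a 0 ≺_P b 0` contradicts `a (0 + 1) ⊀_P b 0`. -/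

lemma not_forall_rel_apply_add_one {α : Type*} {r : α → α → Prop} (hirr : ∀ x, ¬ r x x)
    (htrans : ∀ ⦃x y z⦄, r x y → r y z → r x z) {n : ℕ} (f : ZMod (n + 1) → α) :
    ¬ ∀ i, r (f (i + 1)) (f i) := by
  intro hdesc
  have hchain : ∀ m : ℕ, r (f (m + 1 : ℕ)) (f 0) := by
    intro m
    induction m with
    | zero => simpa using hdesc 0
    | succ m ih => exact htrans (by simpa using hdesc (m + 1 : ℕ)) ih
  exact hirr _ (by simpa using hchain n)

lemma Fin.succ_sub_one_add_one {n : ℕ} (j : Fin (n + 1)) :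
    (j - 1).succ + 1 = if j = 0 then 0 else j.succ := by
  split_ifs with hj
  · subst hj
    ext
    simp [Fin.val_add]
  · ext
    have hj0 : (j : ℕ) ≠ 0 := fun h => hj (Fin.ext h)
    simp only [Fin.val_add, Fin.val_succ, Fin.coe_sub_one, hj, ↓reduceIte, Fin.coe_ofNat_eq_mod,
      Nat.one_mod]
    rw [Nat.mod_eq_of_lt (by omega)]
    omega

section
variable {P L : V → V → Prop}

namespace IsAltAnticycle

lemma comp {k m : ℕ} {a b : ZMod k → V} (hC : IsAltAnticycle P L k a b) {f g : ZMod m → ZMod k}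
    (hf : f.Injective) (hg : g.Injective) (hfg : ∀ j, f (j + 1) = g j + 1)
    (hP : ∀ j, P (a (f j)) (b (g j))) : IsAltAnticycle P L m (a ∘ f) (b ∘ g) := by
  obtain ⟨ha, hb, hab, hcyc⟩ := hC
  refine ⟨ha.comp hf, hb.comp hg, fun i j => hab _ _, fun j => ⟨hP j, ?_⟩⟩
  simpa [hfg] using (hcyc (g j)).2

lemma shortcut {n : ℕ} {a b : ZMod (n + 2) → V} (hC : IsAltAnticycle P L (n + 2) a b)
    {i : ZMod (n + 2)} (hi : P (a i) (b (i + 1))) :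
    ∃ a' b' : ZMod (n + 1) → V, IsAltAnticycle P L (n + 1) a' b' := by
  let s : ZMod (n + 1) → ZMod (n + 2) := Fin.succ
  let g : ZMod (n + 1) → ZMod (n + 2) := fun j => s j + i
  have hg : g.Injective := fun x y h => Fin.succ_injective _ (add_left_injective i h)
  -- `a ∘ f` and `b ∘ g` skip `a (i + 1)` and `b i`, and pair `a i` with `b (i + 1)`.
  refine ⟨_, _, hC.comp (f := fun j => g (j - 1) + 1) ?_ hg (fun j => by simp) fun j => ?_⟩
  · exact (add_left_injective 1).comp (hg.comp sub_left_injective)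
  · show P (a (s (j - 1) + i + 1)) (b (s j + i))
    have key : s (j - 1) + 1 = if j = 0 then 0 else s j := Fin.succ_sub_one_add_one j
    rw [add_right_comm, key]
    split_ifs with hj
    · subst hj
      have h1 : s 0 = 1 := Fin.succ_zero_eq_one
      simpa [h1, add_comm] using hi
    · exact (hC.2.2.2 _).1

lemma isAlt4Anticycle {n : ℕ} {a b : ZMod (n + 2) → V} (hC : IsAltAnticycle P L (n + 2) a b)
    {i : ZMod (n + 2)} (hL : L (a i) (b (i + 1))) (hnP : ¬ P (a i) (b (i + 1))) :
    IsAlt4Anticycle P L (a i) (b i) (a (i + 1)) (b (i + 1)) := by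
  obtain ⟨ha, hb, hab, hcyc⟩ := hC
  have : Fact (1 < n + 2) := ⟨by omega⟩
  have hi : i ≠ i + 1 := by simp
  refine ⟨?_, (hcyc i).1, (hcyc (i + 1)).1, (hcyc i).2.1, (hcyc i).2.2, hL, hnP⟩
  simp [hab, ha.ne hi, hb.ne hi, (hab _ _).symm]

lemma not_one {a b : ZMod 1 → V} : ¬ IsAltAnticycle P L 1 a b := fun hC =>
  (hC.2.2.2 0).2.2 (by simpa [Subsingleton.elim (0 + 1 : ZMod 1) 0] using (hC.2.2.2 0).1)

end IsAltAnticycle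

theorem not_isAltAnticycle_of_forall_not_isAlt4Anticycle (hL : IsLinExt P L)
    (h4 : ∀ a0 b0 a1 b1 : V, ¬ IsAlt4Anticycle P L a0 b0 a1 b1) :
    ∀ (n : ℕ) (a b : ZMod (n + 1) → V), ¬ IsAltAnticycle P L (n + 1) a b
  | 0, _, _ => IsAltAnticycle.not_one
  | n + 1, a, b => fun hC => by
    by_cases hchord : ∃ i, P (a i) (b (i + 1))
    · obtain ⟨i, hi⟩ := hchord
      obtain ⟨a', b', hC'⟩ := hC.shortcut hi
      exact not_isAltAnticycle_of_forall_not_isAlt4Anticycle hL h4 n a' b' hC'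
    · push Not at hchord
      obtain ⟨⟨hirr, htrans, htot⟩, hPL⟩ := hL
      refine not_forall_rel_apply_add_one hirr htrans b fun i => ?_
      rcases htot _ _ (hC.2.2.1 i (i + 1)) with h | h
      · exact absurd (hC.isAlt4Anticycle h (hchord i)) (h4 _ _ _ _)
      · exact htrans h (hPL _ _ (hC.2.2.2 i).1)

end

theorem stmt2_general {V : Type*} (P L : V → V → Prop)
    (hL : IsLinExt P L)
    (h4 : ∀ a0 b0 a1 b1 : V, ¬ IsAlt4Anticycle P L a0 b0 a1 b1) :
    ∀ k : ℕ, 2 ≤ k → ∀ a b : ZMod k → V, ¬ IsAltAnticycle P L k a b := by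
  intro k hk
  obtain ⟨n, rfl⟩ := Nat.exists_eq_succ_of_ne_zero (by omega : k ≠ 0)
  exact not_isAltAnticycle_of_forall_not_isAlt4Anticycle hL h4 n

theorem stmt2 {V : Type*} [Fintype V] (P L : V → V → Prop)
    (hP : IsPartialOrd P) (hL : IsLinExt P L)
    (h4 : ∀ a0 b0 a1 b1 : V, ¬ IsAlt4Anticycle P L a0 b0 a1 b1) :
    ∀ k : ℕ, 2 ≤ k → ∀ a b : ZMod k → V, ¬ IsAltAnticycle P L k a b :=
  stmt2_general P L hL h4
end

section
/- Let P be a partial order on a finite nonempty set V, L a linear extension of P containing no alternating anticycle, and S the set of minimal elements of P. Then there exists a minimal element a ∈ S such that for every b ∈ V \ S, a ≺_L b implies a ≺_P b. -/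
variable {V : Type*}

/-!
Suppose no minimal element works. Then every minimal `a` has a non-minimal `β a` with
`a ≺_L β a` but `a ⊀_P β a`, and below `β a` lies a minimal element `G a := μ (β a)`.
The self-map `G` of the finite set of minimal elements has a cycle, of length at least 2 since
`G a ≺_P β a` forbids `G a = a`. Read backwards, the cycle `a_i = G a_{i+1}`, `b_i = β a_{i+1}`
is an alternating anticycle: distinctness of the `b_i` comes from `a_i = μ b_i`.
-/

open Function

theorem Function.periodicPts_nonempty {α : Type*} [Finite α] [Nonempty α] (f : α → α) :
    (periodicPts f).Nonempty := by
  obtain ⟨m, n, hmn, heq⟩ :=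
    Finite.exists_ne_map_eq_of_infinite fun n => f^[n] (Classical.arbitrary α)
  wlog hlt : m < n generalizing m n
  · exact this n m hmn.symm heq.symm (hmn.lt_or_gt.resolve_left hlt)
  refine ⟨f^[m] (Classical.arbitrary α), n - m, by omega, ?_⟩
  rw [IsPeriodicPt, IsFixedPt, ← iterate_add_apply, Nat.sub_add_cancel hlt.le]
  exact heq.symm

theorem Function.exists_injective_zmod_cycle {α : Type*} [Finite α] [Nonempty α] (f : α → α) :
    ∃ (p : ℕ) (c : ZMod p → α), 0 < p ∧ Injective c ∧ ∀ j, f (c j) = c (j + 1) := by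
  obtain ⟨x, hx⟩ := periodicPts_nonempty f
  have hp := minimalPeriod_pos_of_mem_periodicPts hx
  have : NeZero (minimalPeriod f x) := ⟨hp.ne'⟩
  refine ⟨minimalPeriod f x, fun j => f^[j.val] x, hp, ?_, fun j => ?_⟩
  · intro i j hij
    exact ZMod.val_injective _
      (iterate_injOn_Iio_minimalPeriod (ZMod.val_lt i) (ZMod.val_lt j) hij)
  · show f (f^[j.val] x) = f^[(j + 1).val] x
    rw [← iterate_succ_apply' f, ZMod.val_add, ZMod.val_one_eq_one_mod,
      Nat.add_mod_mod, iterate_mod_minimalPeriod_eq]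

section

variable {V : Type*} {P L : V → V → Prop}

theorem IsPartialOrd.wellFounded [Finite V] (hP : IsPartialOrd P) : WellFounded P :=
  haveI : Std.Irrefl P := ⟨hP.1⟩
  haveI : IsTrans V P := ⟨fun _ _ _ => (hP.2 · ·)⟩
  Finite.wellFounded_of_trans_of_irrefl P

theorem IsPartialOrd.exists_minimal_lt [Finite V] (hP : IsPartialOrd P) {b : V}
    (hb : ∃ c, P c b) : ∃ m, (∀ d, ¬ P d m) ∧ P m b := by
  obtain ⟨m, hmb, hmin⟩ := hP.wellFounded.has_min {c | P c b} hb
  exact ⟨m, fun d hdm => hmin d (hP.2 hdm hmb) hdm, hmb⟩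

theorem IsPartialOrd.exists_minimal [Finite V] [Nonempty V] (hP : IsPartialOrd P) :
    ∃ m : V, ∀ d, ¬ P d m := by
  by_cases h : ∃ c, P c (Classical.arbitrary V)
  · exact (hP.exists_minimal_lt h).imp fun _ => And.left
  · exact ⟨_, not_exists.mp h⟩

theorem isAltAnticycle_of_minimal {k : ℕ} {a b : ZMod k → V} (μ : V → V) (ha : Injective a)
    (hμ : ∀ i, μ (b i) = a i) (hmin : ∀ i d, ¬ P d (a i))
    (hab : ∀ i, P (a i) (b i) ∧ L (a (i + 1)) (b i) ∧ ¬ P (a (i + 1)) (b i)) :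
    IsAltAnticycle P L k a b := by
  refine ⟨ha, .of_comp (f := μ) ?_, fun i j hij => ?_, hab⟩
  · simpa only [comp_def, hμ] using ha
  · exact hmin i _ (hij ▸ (hab j).1)

end

theorem stmt3_general {V : Type*} [Fintype V] [Nonempty V] (P L : V → V → Prop)
    (hP : IsPartialOrd P)
    (hno : ∀ k : ℕ, 2 ≤ k → ∀ a b : ZMod k → V, ¬ IsAltAnticycle P L k a b) :
    ∃ a : V, (∀ b : V, ¬ P b a) ∧
      ∀ b : V, ¬ (∀ c : V, ¬ P c b) → L a b → P a b := by
  by_contra! hbad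
  let S := {a : V // ∀ b, ¬ P b a}
  have : Nonempty S := let ⟨m, hm⟩ := hP.exists_minimal; ⟨⟨m, hm⟩⟩
  choose β hβ using fun a : S => hbad a a.2
  choose! μ hμmin hμlt using fun b : V => hP.exists_minimal_lt (b := b)
  let G : S → S := fun a => ⟨μ (β a), hμmin _ (hβ a).1⟩
  have hG : ∀ a, G a ≠ a := fun a h => by
    have hGβ : P (G a).val (β a) := hμlt _ (hβ a).1
    rw [h] at hGβ
    exact (hβ a).2.2 hGβ
  obtain ⟨p, c, hp, hc, hGc⟩ := exists_injective_zmod_cycle G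
  have hp2 : 2 ≤ p := by
    by_contra! hp1
    obtain rfl : p = 1 := by omega
    exact hG (c 0) ((hGc 0).trans (congrArg c (Subsingleton.elim _ _)))
  have hGc' : ∀ i : ZMod p, G (c (-(i + 1))) = c (-i) := fun i => by
    rw [hGc, neg_add, neg_add_cancel_right]
  refine hno p hp2 (fun i => c (-i)) (fun i => β (c (-(i + 1)))) ?_
  refine isAltAnticycle_of_minimal μ (Subtype.val_injective.comp (hc.comp neg_injective))
    (fun i => congrArg Subtype.val (hGc' i)) (fun i => (c (-i)).2) fun i => ?_
  obtain ⟨hβmin, hLβ, hPβ⟩ := hβ (c (-(i + 1)))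
  exact ⟨congrArg Subtype.val (hGc' i) ▸ hμlt _ hβmin, hLβ, hPβ⟩

theorem stmt3 {V : Type*} [Fintype V] [Nonempty V] (P L : V → V → Prop)
    (hP : IsPartialOrd P) (hL : IsLinExt P L)
    (hno : ∀ k : ℕ, 2 ≤ k → ∀ a b : ZMod k → V, ¬ IsAltAnticycle P L k a b) :
    ∃ a : V, (∀ b : V, ¬ P b a) ∧
      ∀ b : V, ¬ (∀ c : V, ¬ P c b) → L a b → P a b :=
  stmt3_general P L hP hno
end

section
/- If a partial order P has a linear extension L containing no alternating 4-anticycle, then there exists an interval order P_I on the same ground set with P = L ∩ P_I. -/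
/-!
Any representation must satisfy `r u < l v ≤ r u'` whenever `u ≺_P v` and `u'` is `v` itself
or an `L`-predecessor of `v` that is `P`-incomparable to it (`ReachesLeftEnd`); call this
`RightEndLT u u'`. The relation `RightEndLT` is irreflexive, and every failure of transitivity
exhibits an alternating 4-anticycle, so without those it is a strict partial order. On a finite
set it then has a rank function `q` into `ℕ`; take `r = q` and let `l v` be the least rank of an
element reaching the left end of `v`.
-/

variable {V : Type*}

variable {P L : V → V → Prop}

def ReachesLeftEnd (P L : V → V → Prop) (w v : V) : Prop :=
  w = v ∨ (L w v ∧ ¬ P w v)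

def RightEndLT (P L : V → V → Prop) (u u' : V) : Prop :=
  ∃ v, P u v ∧ ReachesLeftEnd P L u' v

theorem isAlt4Anticycle_of_rel (hP : ∀ a, ¬ P a a) (hL : ∀ a, ¬ L a a) {a0 b0 a1 b1 : V}
    (h00 : P a0 b0) (h11 : P a1 b1) (hL10 : L a1 b0) (hP10 : ¬ P a1 b0) (hL01 : L a0 b1)
    (hP01 : ¬ P a0 b1) : IsAlt4Anticycle P L a0 b0 a1 b1 := by
  refine ⟨?_, h00, h11, hL10, hP10, hL01, hP01⟩
  have ha0b0 : a0 ≠ b0 := fun h => hP a0 (h ▸ h00)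
  have ha1b1 : a1 ≠ b1 := fun h => hP a1 (h ▸ h11)
  have ha0a1 : a0 ≠ a1 := fun h => hP10 (h ▸ h00)
  have hb0b1 : b0 ≠ b1 := fun h => hP10 (h ▸ h11)
  have ha0b1 : a0 ≠ b1 := fun h => hL a0 (h ▸ hL01)
  have ha1b0 : a1 ≠ b0 := fun h => hL a1 (h ▸ hL10)
  simp [ha0b0, ha1b1, ha0a1, hb0b1, ha0b1, ha1b0.symm]

theorem rightEndLT_irrefl (hP : ∀ a, ¬ P a a) (u : V) : ¬ RightEndLT P L u u := by
  rintro ⟨v, huv, rfl | ⟨-, hnuv⟩⟩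
  exacts [hP u huv, hnuv huv]

theorem rightEndLT_trans (hP : IsPartialOrd P) (hL : IsLinExt P L)
    (h4 : ∀ a0 b0 a1 b1 : V, ¬ IsAlt4Anticycle P L a0 b0 a1 b1) {u x y : V}
    (hux : RightEndLT P L u x) (hxy : RightEndLT P L x y) : RightEndLT P L u y := by
  obtain ⟨hPirr, hPtrans⟩ := hP
  obtain ⟨⟨hLirr, hLtrans, hLtotal⟩, hPL⟩ := hL
  have anticycle := fun {a0 b0 a1 b1 : V} h00 h11 hL10 hP10 hL01 hP01 =>
    h4 a0 b0 a1 b1 (isAlt4Anticycle_of_rel hPirr hLirr h00 h11 hL10 hP10 hL01 hP01)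
  obtain ⟨v, huv, rfl | ⟨hLxv, hPxv⟩⟩ := hux <;> obtain ⟨w, hxw, hyw⟩ := hxy
  · exact ⟨w, hPtrans huv hxw, hyw⟩
  by_cases huw : P u w
  · exact ⟨w, huw, hyw⟩
  have hwu : L w u := by
    have hne : u ≠ w := by rintro rfl; exact hPxv (hPtrans hxw huv)
    exact (hLtotal u w hne).resolve_left fun hLuw => anticycle huv hxw hLxv hPxv hLuw huw
  refine ⟨v, huv, Or.inr ⟨?_, fun hyv => ?_⟩⟩
  · have hyu : L y u := by
      rcases hyw with rfl | ⟨hLyw, -⟩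
      exacts [hwu, hLtrans hLyw hwu]
    exact hLtrans hyu (hPL u v huv)
  · rcases hyw with rfl | ⟨hLyw, hPyw⟩
    exacts [hPxv (hPtrans hxw hyv), anticycle hxw hyv hLyw hPyw hLxv hPxv]

theorem exists_nat_strictMono_of_irrefl_of_trans [Fintype V] {R : V → V → Prop}
    (hirr : ∀ u, ¬ R u u) (htrans : ∀ {u v w}, R u v → R v w → R u w) :
    ∃ q : V → ℕ, ∀ u v, R u v → q u < q v := by
  classical
  refine ⟨fun v => (Finset.univ.filter (R · v)).card, fun u v huv => Finset.card_lt_card ?_⟩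
  refine Finset.ssubset_iff_of_subset (fun w => ?_) |>.2 ⟨u, ?_, ?_⟩
  · simpa using fun hwu => htrans hwu huv
  · simpa using huv
  · simpa using hirr u

theorem exists_interval_rep_of_rank (hPL : ∀ u v, P u v → L u v) (q : V → ℕ)
    (hq : ∀ u u', RightEndLT P L u u' → q u < q u') :
    ∃ l r : V → ℝ, (∀ v, l v ≤ r v) ∧ ∀ u v : V, P u v ↔ L u v ∧ r u < l v := by
  let lq (v : V) : ℕ := sInf (q '' {w | ReachesLeftEnd P L w v})
  have lq_le {w v : V} (h : ReachesLeftEnd P L w v) : lq v ≤ q w := Nat.sInf_le ⟨w, h, rfl⟩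
  have lt_lq {u v : V} (huv : P u v) : q u < lq v := by
    obtain ⟨w, hwv, hw⟩ := Nat.sInf_mem (s := q '' {w | ReachesLeftEnd P L w v})
      ⟨q v, v, Or.inl rfl, rfl⟩
    exact (show q w = lq v from hw) ▸ hq u w ⟨v, huv, hwv⟩
  refine ⟨fun v => lq v, fun v => q v, fun v => Nat.cast_le.2 (lq_le (Or.inl rfl)),
    fun u v => ⟨fun huv => ⟨hPL u v huv, Nat.cast_lt.2 (lt_lq huv)⟩, fun ⟨hLuv, hlt⟩ => ?_⟩⟩
  by_contra huv
  exact (Nat.cast_lt.1 hlt).not_ge (lq_le (Or.inr ⟨hLuv, huv⟩))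

theorem stmt4 {V : Type*} [Fintype V] (P L : V → V → Prop)
    (hP : IsPartialOrd P) (hL : IsLinExt P L)
    (h4 : ∀ a0 b0 a1 b1 : V, ¬ IsAlt4Anticycle P L a0 b0 a1 b1) :
    ∃ l r : V → ℝ, (∀ v, l v ≤ r v) ∧
      ∀ u v : V, P u v ↔ L u v ∧ r u < l v := by
  obtain ⟨q, hq⟩ := exists_nat_strictMono_of_irrefl_of_trans (rightEndLT_irrefl hP.1)
    (rightEndLT_trans hP hL h4)
  exact exists_interval_rep_of_rank hL.2 q hq
end

section
/- A partial order P is a linear-interval order if and only if P has a linear extension that contains no alternating 4-anticycle. -/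
variable {V : Type*}

section AuxLIO

variable {V : Type*}

/-- Auxiliary relation: `Rrel P L v w` iff some `u` below `v` in `L` but not in `P`
has `P u w`.  In any interval representation compatible with `L`, the left endpoint
of `v` must come strictly before that of `w`. -/
private def Rrel (P L : V → V → Prop) (v w : V) : Prop :=
  ∃ u, L u v ∧ ¬ P u v ∧ P u w

private def Srel (P L : V → V → Prop) (v w : V) : Prop :=
  P v w ∨ Rrel P L v w

/-- A cyclic sequence of period `k` all of whose steps are `R`-steps. -/
private def IsCyc (R : V → V → Prop) (k : ℕ) : Prop :=
  ∃ v : ℕ → V, (∀ i, v (i + k) = v i) ∧ ∀ i, R (v i) (v (i + 1))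

private lemma succ_mod (k j : ℕ) (hk : 0 < k) :
    ((j + 1) % k = j % k + 1 ∧ j % k + 1 < k) ∨ (j % k + 1 = k ∧ (j + 1) % k = 0) := by
  have h := Nat.mod_lt j hk
  rcases Nat.lt_or_ge (j % k + 1) k with h' | h'
  · left
    refine ⟨?_, h'⟩
    rw [← Nat.mod_add_mod, Nat.mod_eq_of_lt h']
  · have h'' : j % k + 1 = k := by omega
    right
    refine ⟨h'', ?_⟩
    rw [← Nat.mod_add_mod, h'', Nat.mod_self]

private lemma nodup4 {a b c d : V} (h1 : a ≠ b) (h2 : a ≠ c) (h3 : a ≠ d)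
    (h4 : b ≠ c) (h5 : b ≠ d) (h6 : c ≠ d) : ([a, b, c, d] : List V).Nodup := by
  simp [h1, h2, h3, h4, h5, h6]

private lemma Rrel_absorb {P L : V → V → Prop} (hPt : Transitive P) {a b c : V}
    (h : Rrel P L a b) (h2 : P b c) : Rrel P L a c := by
  obtain ⟨u, ha, hb, hc⟩ := h
  exact ⟨u, ha, hb, hPt hc h2⟩

private lemma transGen_absorb {P L : V → V → Prop} (hPt : Transitive P) {a b c : V}
    (h : Relation.TransGen (Rrel P L) a b) (h2 : P b c) :
    Relation.TransGen (Rrel P L) a c := by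
  revert h2
  induction h with
  | single hr => exact fun h2 => Relation.TransGen.single (Rrel_absorb hPt hr h2)
  | tail h1 hr _ => exact fun h2 => Relation.TransGen.tail h1 (Rrel_absorb hPt hr h2)

private lemma transGen_split {P L : V → V → Prop} (hPt : Transitive P) {x y : V}
    (h : Relation.TransGen (Srel P L) x y) :
    P x y ∨ Relation.TransGen (Rrel P L) x y ∨
      ∃ m, P x m ∧ Relation.TransGen (Rrel P L) m y := by
  induction h with
  | single h =>
    rcases h with h | h
    · exact Or.inl h
    · exact Or.inr (Or.inl (Relation.TransGen.single h))
  | tail h1 hr ih =>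
    rcases ih with h' | h' | ⟨m, hm1, hm2⟩ <;> rcases hr with hr | hr
    · exact Or.inl (hPt h' hr)
    · exact Or.inr (Or.inr ⟨_, h', Relation.TransGen.single hr⟩)
    · exact Or.inr (Or.inl (transGen_absorb hPt h' hr))
    · exact Or.inr (Or.inl (Relation.TransGen.tail h' hr))
    · exact Or.inr (Or.inr ⟨m, hm1, transGen_absorb hPt hm2 hr⟩)
    · exact Or.inr (Or.inr ⟨m, hm1, Relation.TransGen.tail hm2 hr⟩)

private lemma transGen_path {R : V → V → Prop} {a b : V} (h : Relation.TransGen R a b) :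
    ∃ (n : ℕ) (f : ℕ → V), 0 < n ∧ f 0 = a ∧ f n = b ∧ ∀ i < n, R (f i) (f (i + 1)) := by
  induction h with
  | single hr =>
    rename_i c
    refine ⟨1, fun i => if i = 0 then a else c, one_pos, by simp, by simp, ?_⟩
    intro i hi
    have : i = 0 := by omega
    subst this
    simpa using hr
  | tail h1 hr ih =>
    rename_i y c
    obtain ⟨n, f, hn, h0, hb, he⟩ := ih
    refine ⟨n + 1, fun i => if i ≤ n then f i else c, by omega, by simp [h0],
      by simp only [if_neg (show ¬ (n + 1 ≤ n) by omega)], ?_⟩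
    intro i hi
    rcases Nat.lt_or_ge i n with hlt | hge
    · simp only [if_pos (Nat.le_of_lt hlt), if_pos (Nat.succ_le_of_lt hlt)]
      exact he i hlt
    · have hieq : i = n := by omega
      subst hieq
      simp only [if_pos (le_refl i), if_neg (by omega : ¬ i + 1 ≤ i)]
      rw [hb]
      exact hr

private lemma transGen_cycle {R : V → V → Prop} {c : V} (h : Relation.TransGen R c c) :
    ∃ k, 0 < k ∧ IsCyc R k := by
  obtain ⟨n, f, hn, h0, hb, he⟩ := transGen_path h
  refine ⟨n, hn, fun j => f (j % n), ?_, ?_⟩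
  · intro i; simp [Nat.add_mod_right]
  · intro j
    show R (f (j % n)) (f ((j + 1) % n))
    rcases succ_mod n j hn with ⟨h1, _⟩ | ⟨h1, h2⟩
    · rw [h1]
      exact he _ (Nat.mod_lt _ hn)
    · rw [h2]
      have h3 : f 0 = f (j % n + 1) := by rw [h0, ← hb, h1]
      rw [h3]
      exact he _ (by omega)

private lemma no_R_cycle {P L : V → V → Prop} (hP : IsPartialOrd P) (hext : IsLinExt P L)
    (hno : ∀ a0 b0 a1 b1 : V, ¬ IsAlt4Anticycle P L a0 b0 a1 b1) :
    ∀ k, 0 < k → ¬ IsCyc (Rrel P L) k := by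
  classical
  obtain ⟨hPirr, hPtr⟩ := hP
  obtain ⟨⟨hLirr, hLtr, hLtot⟩, hPL⟩ := hext
  intro k
  induction k using Nat.strong_induction_on with
  | _ k IH =>
  intro hk hcyc
  obtain ⟨v, hper, hstep⟩ := hcyc
  choose u hLu hnPu hPu using hstep
  have hstep' : ∀ i, Rrel P L (v i) (v (i + 1)) := fun i => ⟨u i, hLu i, hnPu i, hPu i⟩
  rcases Nat.lt_or_ge k 2 with hk2 | hk2
  · -- k = 1 : immediate contradiction
    have hk1 : k = 1 := by omega
    subst hk1
    exact hnPu 0 (by have h := hPu 0; rwa [hper 0] at h)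
  rcases Nat.lt_or_ge k 3 with hk3 | hk3
  · -- k = 2 : we get an alternating 4-anticycle
    have hk2' : k = 2 := by omega
    subst hk2'
    have hv20 : v 2 = v 0 := by simpa using hper 0
    have hP0 : P (u 0) (v 1) := by simpa using hPu 0
    have hP1 : P (u 1) (v 0) := by
      have h := hPu 1
      rw [show (1 : ℕ) + 1 = 2 by norm_num] at h
      rwa [hv20] at h
    have hL1 : L (u 1) (v 1) := hLu 1
    have hL0 : L (u 0) (v 0) := hLu 0
    have hnP1 : ¬ P (u 1) (v 1) := hnPu 1
    have hnP0 : ¬ P (u 0) (v 0) := hnPu 0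
    apply hno (u 0) (v 1) (u 1) (v 0)
    refine ⟨nodup4 ?_ ?_ ?_ ?_ ?_ ?_, hP0, hP1, hL1, hnP1, hL0, hnP0⟩
    · intro h; rw [h] at hP0; exact hPirr _ hP0
    · intro h; rw [← h] at hP1; exact hnP0 hP1
    · intro h; rw [h] at hL0; exact hLirr _ hL0
    · intro h; rw [← h] at hL1; exact hLirr _ hL1
    · intro h; rw [h] at hP0; exact hnP0 hP0
    · intro h; rw [h] at hP1; exact hPirr _ hP1
  -- k ≥ 3
  by_cases hA : ∃ i, P (u i) (v (i + 2))
  · -- chord: shorter cycle of length k - 1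
    obtain ⟨i, hchord⟩ := hA
    obtain ⟨m, rfl⟩ : ∃ m, k = m + 1 := ⟨k - 1, by omega⟩
    have hm2 : 2 ≤ m := by omega
    refine IH m (by omega) (by omega)
      ⟨fun j => if j % m = 0 then v i else v (i + j % m + 1), ?_, ?_⟩
    · intro j
      simp only [Nat.add_mod_right]
    · intro j
      show Rrel P L (if j % m = 0 then v i else v (i + j % m + 1))
        (if (j + 1) % m = 0 then v i else v (i + (j + 1) % m + 1))
      rcases succ_mod m j (by omega) with ⟨h1, h2⟩ | ⟨h1, h2⟩
      · rw [h1, if_neg (show ¬ (j % m + 1 = 0) by omega)]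
        by_cases hz : j % m = 0
        · rw [if_pos hz, hz, show i + (0 + 1) + 1 = i + 2 by omega]
          exact ⟨u i, hLu i, hnPu i, hchord⟩
        · rw [if_neg hz, show i + (j % m + 1) + 1 = (i + j % m + 1) + 1 by omega]
          exact hstep' _
      · rw [h2, if_pos (show (0 : ℕ) = 0 from rfl),
          if_neg (show ¬ (j % m = 0) by omega)]
        have h3 := hstep' (i + j % m + 1)
        rwa [show i + j % m + 1 + 1 = i + (m + 1) by omega, hper i] at h3
  by_cases hB : ∃ i, L (u i) (v (i + 2))
  · -- a 2-cycle exists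
    obtain ⟨i, hLB⟩ := hB
    refine IH 2 (by omega) (by omega)
      ⟨fun j => if j % 2 = 0 then v (i + 1) else v (i + 2), ?_, ?_⟩
    · intro j
      simp only [Nat.add_mod_right]
    · intro j
      show Rrel P L (if j % 2 = 0 then v (i + 1) else v (i + 2))
        (if (j + 1) % 2 = 0 then v (i + 1) else v (i + 2))
      by_cases hz : j % 2 = 0
      · rw [if_pos hz, if_neg (show ¬ ((j + 1) % 2 = 0) by omega)]
        have h := hstep' (i + 1)
        rwa [show i + 1 + 1 = i + 2 by omega] at h
      · rw [if_neg hz, if_pos (show (j + 1) % 2 = 0 by omega)]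
        exact ⟨u i, hLB, fun hc => hA ⟨i, hc⟩, hPu i⟩
  · -- neither: L goes backwards along the cycle, contradiction
    push_neg at hA hB
    have hLvu : ∀ i, L (v (i + 2)) (u i) := by
      intro i
      have hne : u i ≠ v (i + 2) := by
        intro h
        have h1 : P (u (i + 1)) (v (i + 2)) := by
          have h2 := hPu (i + 1)
          rwa [show i + 1 + 1 = i + 2 by omega] at h2
        rw [← h] at h1
        exact hnPu (i + 1) (hPtr h1 (hPu i))
      exact (hLtot _ _ hne).resolve_left (hB i)
    have hLvv : ∀ i, L (v (i + 2)) (v i) := fun i => hLtr (hLvu i) (hLu i)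
    have chain : ∀ n : ℕ, L (v (2 * n + 2)) (v 0) := by
      intro n
      induction n with
      | zero => simpa using hLvv 0
      | succ n ih =>
        have h1 := hLvv (2 * n + 2)
        rw [show 2 * n + 2 + 2 = 2 * (n + 1) + 2 by ring] at h1
        exact hLtr h1 ih
    have hfin := chain (k - 1)
    rw [show 2 * (k - 1) + 2 = 2 * k by omega] at hfin
    have hv2k : v (2 * k) = v 0 := by
      have h1 := hper k
      have h2 : v k = v 0 := by simpa using hper 0
      rw [show 2 * k = k + k by ring, h1, h2]
    rw [hv2k] at hfin
    exact hLirr _ hfin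
private lemma exists_rep {V : Type*} [Fintype V] (P L : V → V → Prop)
    (hP : IsPartialOrd P) (hext : IsLinExt P L)
    (hno : ∀ a0 b0 a1 b1 : V, ¬ IsAlt4Anticycle P L a0 b0 a1 b1) :
    ∃ l r : V → ℝ, (∀ v, l v ≤ r v) ∧ ∀ u v : V, P u v ↔ L u v ∧ r u < l v := by
  classical
  -- the transitive closure of `Srel P L` is irreflexive
  have hTirr : ∀ x : V, ¬ Relation.TransGen (Srel P L) x x := by
    intro x hx
    have hRcyc : ∃ c, Relation.TransGen (Rrel P L) c c := by
      rcases transGen_split hP.2 hx with h | h | ⟨m, hm1, hm2⟩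
      · exact absurd h (hP.1 x)
      · exact ⟨x, h⟩
      · exact ⟨m, transGen_absorb hP.2 hm2 hm1⟩
    obtain ⟨c, hc⟩ := hRcyc
    obtain ⟨k, hk, hcyc⟩ := transGen_cycle hc
    exact no_R_cycle hP hext hno k hk hcyc
  haveI hpo : IsPartialOrder V (Relation.ReflTransGen (Srel P L)) :=
    { refl := fun _ => Relation.ReflTransGen.refl
      trans := fun _ _ _ => Relation.ReflTransGen.trans
      antisymm := by
        intro a b h1 h2
        by_contra hab
        rcases Relation.reflTransGen_iff_eq_or_transGen.mp h1 with h | h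
        · exact hab h.symm
        · rcases Relation.reflTransGen_iff_eq_or_transGen.mp h2 with h' | h'
          · exact hab h'
          · exact hTirr a (h.trans h') }
  obtain ⟨s, hs, hs_le⟩ := extend_partialOrder (Relation.ReflTransGen (Srel P L))
  haveI : IsLinearOrder V s := hs
  set rank : V → ℕ := fun v => (Finset.univ.filter fun w => s w v).card with hrank
  have hstep_lt : ∀ x y, Srel P L x y → rank x < rank y := by
    intro x y hxy
    have hne : x ≠ y := by
      rintro rfl
      rcases hxy with h | ⟨u', _, h2, h3⟩
      · exact hP.1 x h
      · exact h2 h3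
    have hsxy : s x y := hs_le _ _ (Relation.ReflTransGen.single hxy)
    apply Finset.card_lt_card
    constructor
    · intro w hw
      simp only [Finset.mem_filter, Finset.mem_univ, true_and] at hw ⊢
      exact _root_.trans hw hsxy
    · intro hsub
      have hy : y ∈ Finset.univ.filter fun w => s w y := by
        simp only [Finset.mem_filter, Finset.mem_univ, true_and]
        exact refl_of s y
      have hy' := hsub hy
      simp only [Finset.mem_filter, Finset.mem_univ, true_and] at hy'
      exact hne (antisymm hsxy hy')
  set lam : V → ℝ := fun v => (rank v : ℝ) with hlam
  set F : V → Finset V := fun a => insert a (Finset.univ.filter fun w => L a w ∧ ¬ P a w)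
    with hF
  have hFmem : ∀ a, a ∈ F a := fun a => Finset.mem_insert_self a _
  refine ⟨lam, fun a => (F a).sup' ⟨a, hFmem a⟩ lam, ?_, ?_⟩
  · intro a
    exact Finset.le_sup' lam (hFmem a)
  · intro a b
    constructor
    · intro hab
      refine ⟨hext.2 a b hab, ?_⟩
      show (F a).sup' ⟨a, hFmem a⟩ lam < lam b
      apply (Finset.sup'_lt_iff ⟨a, hFmem a⟩).mpr
      intro w hw
      rcases Finset.mem_insert.mp hw with rfl | hw'
      · show (rank w : ℝ) < (rank b : ℝ)
        exact_mod_cast hstep_lt w b (Or.inl hab)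
      · simp only [Finset.mem_filter, Finset.mem_univ, true_and] at hw'
        show (rank w : ℝ) < (rank b : ℝ)
        exact_mod_cast hstep_lt w b (Or.inr ⟨a, hw'.1, hw'.2, hab⟩)
    · rintro ⟨hL, hlt⟩
      by_contra hnab
      have hb : b ∈ F a := Finset.mem_insert_of_mem (by
        simp only [Finset.mem_filter, Finset.mem_univ, true_and]
        exact ⟨hL, hnab⟩)
      exact absurd hlt (not_lt.mpr (Finset.le_sup' lam hb))
end AuxLIO

theorem stmt6 {V : Type*} [Fintype V] (P : V → V → Prop) (hP : IsPartialOrd P) :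
    IsLinearIntervalOrder P ↔
      ∃ L : V → V → Prop, IsLinExt P L ∧
        ∀ a0 b0 a1 b1 : V, ¬ IsAlt4Anticycle P L a0 b0 a1 b1 := by
  constructor
  · rintro ⟨L, l, r, hL, hlr, hiff⟩
    refine ⟨L, ⟨hL, fun u v h => ((hiff u v).mp h).1⟩, ?_⟩
    rintro a0 b0 a1 b1 ⟨nd, h00, h11, hL10, hnP10, hL01, hnP01⟩
    have h1 : r a0 < l b0 := ((hiff _ _).mp h00).2
    have h2 : r a1 < l b1 := ((hiff _ _).mp h11).2
    have h3 : l b0 ≤ r a1 := by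
      by_contra h
      exact hnP10 ((hiff _ _).mpr ⟨hL10, not_le.mp h⟩)
    have h4 : l b1 ≤ r a0 := by
      by_contra h
      exact hnP01 ((hiff _ _).mpr ⟨hL01, not_le.mp h⟩)
    linarith
  · rintro ⟨L, hext, hno⟩
    obtain ⟨l, r, hlr, hiff⟩ := exists_rep P L hP hext hno
    exact ⟨L, l, r, hext.1, hlr, hiff⟩
end
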